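/- For octonions a and b, the matrices defined by P(x) = (tr(conj(e_i)*x*e_k)/2)_{i,k} satisfy P(a)·P(b)^T + P(b)·P(a)^T = tr(conj(a)*b)·Id, i.e. the Clifford relation associated to the bilinear form of the norm. -/
import Mathlib


open Matrix

noncomputable section

abbrev O := Fin 8 → ℝ

def e (i : Fin 8) : O := fun k => if k = i then 1 else 0

/-- Multiplication table: `tbl i j = (s, k)` means `e i * e j = s • e k`. -/
def tbl : Fin 8 → Fin 8 → ℤ × Fin 8 :=
  ![![(1,0),(1,1),(1,2),(1,3),(1,4),(1,5),(1,6),(1,7)],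
    ![(1,1),(-1,0),(1,4),(1,7),(-1,2),(1,6),(-1,5),(-1,3)],
    ![(1,2),(-1,4),(-1,0),(1,5),(1,1),(-1,3),(1,7),(-1,6)],
    ![(1,3),(-1,7),(-1,5),(-1,0),(1,6),(1,2),(-1,4),(1,1)],
    ![(1,4),(1,2),(-1,1),(-1,6),(-1,0),(1,7),(1,3),(-1,5)],
    ![(1,5),(-1,6),(1,3),(-1,2),(-1,7),(-1,0),(1,1),(1,4)],
    ![(1,6),(1,5),(-1,7),(1,4),(-1,3),(-1,1),(-1,0),(1,2)],
    ![(1,7),(1,3),(1,6),(-1,1),(1,5),(-1,4),(-1,2),(-1,0)]]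

/-- The octonion product. -/
def omul (x y : O) : O :=
  fun k => ∑ i : Fin 8, ∑ j : Fin 8,
    x i * y j * (if k = (tbl i j).2 then ((tbl i j).1 : ℝ) else 0)

/-- Octonion conjugation. -/
def oconj (x : O) : O := fun k => if k = 0 then x 0 else -x k

/-- The trace `tr x = x + conj x = 2 x₀`. -/
def otr (x : O) : ℝ := 2 * x 0

/-- The norm `N x = x₀² + ⋯ + x₇²`. -/
def oN (x : O) : ℝ := ∑ i : Fin 8, (x i) ^ 2

/-- The basis of the integral octaves. -/
def f : Fin 8 → O :=
  ![e 0, e 1, e 2, e 3,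
    ![0, 1/2, 1/2, 1/2, -1/2, 0, 0, 0],
    ![-1/2, -1/2, 0, 0, -1/2, 1/2, 0, 0],
    ![-1/2, 1/2, -1/2, 0, 0, 0, 1/2, 0],
    ![-1/2, 0, 1/2, 0, 1/2, 0, 0, 1/2]]

/-- An octave is integral if it is a ℤ-linear combination of `f 0, …, f 7`. -/
def IsIntegralOctave (x : O) : Prop := ∃ c : Fin 8 → ℤ, x = ∑ i : Fin 8, (c i : ℝ) • f i

/-- The matrix `P a = (tr(conj(eᵢ) * a * eₖ)/2)`. -/
def P (a : O) : Matrix (Fin 8) (Fin 8) ℝ :=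
  Matrix.of fun i k => otr (omul (omul (oconj (e i)) a) (e k)) / 2

/-- The matrix `Q a = (tr(conj(fᵢ) * a * fⱼ))`. -/
def Q (a : O) : Matrix (Fin 8) (Fin 8) ℝ :=
  Matrix.of fun i j => otr (omul (omul (oconj (f i)) a) (f j))

/-- The matrix whose rows are the coordinates of `f 0, …, f 7`. -/
def F : Matrix (Fin 8) (Fin 8) ℝ := Matrix.of fun i j => f i j

end

noncomputable section

@[simp] lemma tbl_0_0 : tbl 0 0 = (1, 0) := rfl
@[simp] lemma tbl_0_1 : tbl 0 1 = (1, 1) := rfl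
@[simp] lemma tbl_0_2 : tbl 0 2 = (1, 2) := rfl
@[simp] lemma tbl_0_3 : tbl 0 3 = (1, 3) := rfl
@[simp] lemma tbl_0_4 : tbl 0 4 = (1, 4) := rfl
@[simp] lemma tbl_0_5 : tbl 0 5 = (1, 5) := rfl
@[simp] lemma tbl_0_6 : tbl 0 6 = (1, 6) := rfl
@[simp] lemma tbl_0_7 : tbl 0 7 = (1, 7) := rfl
@[simp] lemma tbl_1_0 : tbl 1 0 = (1, 1) := rfl
@[simp] lemma tbl_1_1 : tbl 1 1 = (-1, 0) := rfl
@[simp] lemma tbl_1_2 : tbl 1 2 = (1, 4) := rfl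
@[simp] lemma tbl_1_3 : tbl 1 3 = (1, 7) := rfl
@[simp] lemma tbl_1_4 : tbl 1 4 = (-1, 2) := rfl
@[simp] lemma tbl_1_5 : tbl 1 5 = (1, 6) := rfl
@[simp] lemma tbl_1_6 : tbl 1 6 = (-1, 5) := rfl
@[simp] lemma tbl_1_7 : tbl 1 7 = (-1, 3) := rfl
@[simp] lemma tbl_2_0 : tbl 2 0 = (1, 2) := rfl
@[simp] lemma tbl_2_1 : tbl 2 1 = (-1, 4) := rfl
@[simp] lemma tbl_2_2 : tbl 2 2 = (-1, 0) := rfl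
@[simp] lemma tbl_2_3 : tbl 2 3 = (1, 5) := rfl
@[simp] lemma tbl_2_4 : tbl 2 4 = (1, 1) := rfl
@[simp] lemma tbl_2_5 : tbl 2 5 = (-1, 3) := rfl
@[simp] lemma tbl_2_6 : tbl 2 6 = (1, 7) := rfl
@[simp] lemma tbl_2_7 : tbl 2 7 = (-1, 6) := rfl
@[simp] lemma tbl_3_0 : tbl 3 0 = (1, 3) := rfl
@[simp] lemma tbl_3_1 : tbl 3 1 = (-1, 7) := rfl
@[simp] lemma tbl_3_2 : tbl 3 2 = (-1, 5) := rfl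
@[simp] lemma tbl_3_3 : tbl 3 3 = (-1, 0) := rfl
@[simp] lemma tbl_3_4 : tbl 3 4 = (1, 6) := rfl
@[simp] lemma tbl_3_5 : tbl 3 5 = (1, 2) := rfl
@[simp] lemma tbl_3_6 : tbl 3 6 = (-1, 4) := rfl
@[simp] lemma tbl_3_7 : tbl 3 7 = (1, 1) := rfl
@[simp] lemma tbl_4_0 : tbl 4 0 = (1, 4) := rfl
@[simp] lemma tbl_4_1 : tbl 4 1 = (1, 2) := rfl
@[simp] lemma tbl_4_2 : tbl 4 2 = (-1, 1) := rfl
@[simp] lemma tbl_4_3 : tbl 4 3 = (-1, 6) := rfl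
@[simp] lemma tbl_4_4 : tbl 4 4 = (-1, 0) := rfl
@[simp] lemma tbl_4_5 : tbl 4 5 = (1, 7) := rfl
@[simp] lemma tbl_4_6 : tbl 4 6 = (1, 3) := rfl
@[simp] lemma tbl_4_7 : tbl 4 7 = (-1, 5) := rfl
@[simp] lemma tbl_5_0 : tbl 5 0 = (1, 5) := rfl
@[simp] lemma tbl_5_1 : tbl 5 1 = (-1, 6) := rfl
@[simp] lemma tbl_5_2 : tbl 5 2 = (1, 3) := rfl
@[simp] lemma tbl_5_3 : tbl 5 3 = (-1, 2) := rfl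
@[simp] lemma tbl_5_4 : tbl 5 4 = (-1, 7) := rfl
@[simp] lemma tbl_5_5 : tbl 5 5 = (-1, 0) := rfl
@[simp] lemma tbl_5_6 : tbl 5 6 = (1, 1) := rfl
@[simp] lemma tbl_5_7 : tbl 5 7 = (1, 4) := rfl
@[simp] lemma tbl_6_0 : tbl 6 0 = (1, 6) := rfl
@[simp] lemma tbl_6_1 : tbl 6 1 = (1, 5) := rfl
@[simp] lemma tbl_6_2 : tbl 6 2 = (-1, 7) := rfl
@[simp] lemma tbl_6_3 : tbl 6 3 = (1, 4) := rfl
@[simp] lemma tbl_6_4 : tbl 6 4 = (-1, 3) := rfl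
@[simp] lemma tbl_6_5 : tbl 6 5 = (-1, 1) := rfl
@[simp] lemma tbl_6_6 : tbl 6 6 = (-1, 0) := rfl
@[simp] lemma tbl_6_7 : tbl 6 7 = (1, 2) := rfl
@[simp] lemma tbl_7_0 : tbl 7 0 = (1, 7) := rfl
@[simp] lemma tbl_7_1 : tbl 7 1 = (1, 3) := rfl
@[simp] lemma tbl_7_2 : tbl 7 2 = (1, 6) := rfl
@[simp] lemma tbl_7_3 : tbl 7 3 = (-1, 1) := rfl
@[simp] lemma tbl_7_4 : tbl 7 4 = (1, 5) := rfl
@[simp] lemma tbl_7_5 : tbl 7 5 = (-1, 4) := rfl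
@[simp] lemma tbl_7_6 : tbl 7 6 = (-1, 2) := rfl
@[simp] lemma tbl_7_7 : tbl 7 7 = (-1, 0) := rfl

def Pexp (a : O) : Matrix (Fin 8) (Fin 8) ℝ :=
  Matrix.of
  ![![a 0, -a 1, -a 2, -a 3, -a 4, -a 5, -a 6, -a 7],
    ![a 1, a 0, -a 4, -a 7, a 2, -a 6, a 5, a 3],
    ![a 2, a 4, a 0, -a 5, -a 1, a 3, -a 7, a 6],
    ![a 3, a 7, a 5, a 0, -a 6, -a 2, a 4, -a 1],
    ![a 4, -a 2, a 1, a 6, a 0, -a 7, -a 3, a 5],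
    ![a 5, a 6, -a 3, a 2, a 7, a 0, -a 1, -a 4],
    ![a 6, -a 5, a 7, -a 4, a 3, a 1, a 0, -a 2],
    ![a 7, -a 3, -a 6, a 1, -a 5, a 4, a 2, a 0]]

def cE (a : O) : Fin 8 → O :=
  ![![a 0, a 1, a 2, a 3, a 4, a 5, a 6, a 7],
    ![a 1, -a 0, a 4, a 7, -a 2, a 6, -a 5, -a 3],
    ![a 2, -a 4, -a 0, a 5, a 1, -a 3, a 7, -a 6],
    ![a 3, -a 7, -a 5, -a 0, a 6, a 2, -a 4, a 1],
    ![a 4, a 2, -a 1, -a 6, -a 0, a 7, a 3, -a 5],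
    ![a 5, -a 6, a 3, -a 2, -a 7, -a 0, a 1, a 4],
    ![a 6, a 5, -a 7, a 4, -a 3, -a 1, -a 0, a 2],
    ![a 7, a 3, a 6, -a 1, a 5, -a 4, -a 2, -a 0]]

@[simp] lemma cE_0_0 (a : O) : cE a 0 0 = a 0 := rfl
@[simp] lemma cE_0_1 (a : O) : cE a 0 1 = a 1 := rfl
@[simp] lemma cE_0_2 (a : O) : cE a 0 2 = a 2 := rfl
@[simp] lemma cE_0_3 (a : O) : cE a 0 3 = a 3 := rfl
@[simp] lemma cE_0_4 (a : O) : cE a 0 4 = a 4 := rfl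
@[simp] lemma cE_0_5 (a : O) : cE a 0 5 = a 5 := rfl
@[simp] lemma cE_0_6 (a : O) : cE a 0 6 = a 6 := rfl
@[simp] lemma cE_0_7 (a : O) : cE a 0 7 = a 7 := rfl
@[simp] lemma cE_1_0 (a : O) : cE a 1 0 = a 1 := rfl
@[simp] lemma cE_1_1 (a : O) : cE a 1 1 = -a 0 := rfl
@[simp] lemma cE_1_2 (a : O) : cE a 1 2 = a 4 := rfl
@[simp] lemma cE_1_3 (a : O) : cE a 1 3 = a 7 := rfl
@[simp] lemma cE_1_4 (a : O) : cE a 1 4 = -a 2 := rfl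
@[simp] lemma cE_1_5 (a : O) : cE a 1 5 = a 6 := rfl
@[simp] lemma cE_1_6 (a : O) : cE a 1 6 = -a 5 := rfl
@[simp] lemma cE_1_7 (a : O) : cE a 1 7 = -a 3 := rfl
@[simp] lemma cE_2_0 (a : O) : cE a 2 0 = a 2 := rfl
@[simp] lemma cE_2_1 (a : O) : cE a 2 1 = -a 4 := rfl
@[simp] lemma cE_2_2 (a : O) : cE a 2 2 = -a 0 := rfl
@[simp] lemma cE_2_3 (a : O) : cE a 2 3 = a 5 := rfl
@[simp] lemma cE_2_4 (a : O) : cE a 2 4 = a 1 := rfl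
@[simp] lemma cE_2_5 (a : O) : cE a 2 5 = -a 3 := rfl
@[simp] lemma cE_2_6 (a : O) : cE a 2 6 = a 7 := rfl
@[simp] lemma cE_2_7 (a : O) : cE a 2 7 = -a 6 := rfl
@[simp] lemma cE_3_0 (a : O) : cE a 3 0 = a 3 := rfl
@[simp] lemma cE_3_1 (a : O) : cE a 3 1 = -a 7 := rfl
@[simp] lemma cE_3_2 (a : O) : cE a 3 2 = -a 5 := rfl
@[simp] lemma cE_3_3 (a : O) : cE a 3 3 = -a 0 := rfl
@[simp] lemma cE_3_4 (a : O) : cE a 3 4 = a 6 := rfl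
@[simp] lemma cE_3_5 (a : O) : cE a 3 5 = a 2 := rfl
@[simp] lemma cE_3_6 (a : O) : cE a 3 6 = -a 4 := rfl
@[simp] lemma cE_3_7 (a : O) : cE a 3 7 = a 1 := rfl
@[simp] lemma cE_4_0 (a : O) : cE a 4 0 = a 4 := rfl
@[simp] lemma cE_4_1 (a : O) : cE a 4 1 = a 2 := rfl
@[simp] lemma cE_4_2 (a : O) : cE a 4 2 = -a 1 := rfl
@[simp] lemma cE_4_3 (a : O) : cE a 4 3 = -a 6 := rfl
@[simp] lemma cE_4_4 (a : O) : cE a 4 4 = -a 0 := rfl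
@[simp] lemma cE_4_5 (a : O) : cE a 4 5 = a 7 := rfl
@[simp] lemma cE_4_6 (a : O) : cE a 4 6 = a 3 := rfl
@[simp] lemma cE_4_7 (a : O) : cE a 4 7 = -a 5 := rfl
@[simp] lemma cE_5_0 (a : O) : cE a 5 0 = a 5 := rfl
@[simp] lemma cE_5_1 (a : O) : cE a 5 1 = -a 6 := rfl
@[simp] lemma cE_5_2 (a : O) : cE a 5 2 = a 3 := rfl
@[simp] lemma cE_5_3 (a : O) : cE a 5 3 = -a 2 := rfl
@[simp] lemma cE_5_4 (a : O) : cE a 5 4 = -a 7 := rfl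
@[simp] lemma cE_5_5 (a : O) : cE a 5 5 = -a 0 := rfl
@[simp] lemma cE_5_6 (a : O) : cE a 5 6 = a 1 := rfl
@[simp] lemma cE_5_7 (a : O) : cE a 5 7 = a 4 := rfl
@[simp] lemma cE_6_0 (a : O) : cE a 6 0 = a 6 := rfl
@[simp] lemma cE_6_1 (a : O) : cE a 6 1 = a 5 := rfl
@[simp] lemma cE_6_2 (a : O) : cE a 6 2 = -a 7 := rfl
@[simp] lemma cE_6_3 (a : O) : cE a 6 3 = a 4 := rfl
@[simp] lemma cE_6_4 (a : O) : cE a 6 4 = -a 3 := rfl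
@[simp] lemma cE_6_5 (a : O) : cE a 6 5 = -a 1 := rfl
@[simp] lemma cE_6_6 (a : O) : cE a 6 6 = -a 0 := rfl
@[simp] lemma cE_6_7 (a : O) : cE a 6 7 = a 2 := rfl
@[simp] lemma cE_7_0 (a : O) : cE a 7 0 = a 7 := rfl
@[simp] lemma cE_7_1 (a : O) : cE a 7 1 = a 3 := rfl
@[simp] lemma cE_7_2 (a : O) : cE a 7 2 = a 6 := rfl
@[simp] lemma cE_7_3 (a : O) : cE a 7 3 = -a 1 := rfl
@[simp] lemma cE_7_4 (a : O) : cE a 7 4 = a 5 := rfl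
@[simp] lemma cE_7_5 (a : O) : cE a 7 5 = -a 4 := rfl
@[simp] lemma cE_7_6 (a : O) : cE a 7 6 = -a 2 := rfl
@[simp] lemma cE_7_7 (a : O) : cE a 7 7 = -a 0 := rfl

@[simp] lemma Pexp_0_0 (a : O) : Pexp a 0 0 = a 0 := rfl
@[simp] lemma Pexp_0_1 (a : O) : Pexp a 0 1 = -a 1 := rfl
@[simp] lemma Pexp_0_2 (a : O) : Pexp a 0 2 = -a 2 := rfl
@[simp] lemma Pexp_0_3 (a : O) : Pexp a 0 3 = -a 3 := rfl
@[simp] lemma Pexp_0_4 (a : O) : Pexp a 0 4 = -a 4 := rfl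
@[simp] lemma Pexp_0_5 (a : O) : Pexp a 0 5 = -a 5 := rfl
@[simp] lemma Pexp_0_6 (a : O) : Pexp a 0 6 = -a 6 := rfl
@[simp] lemma Pexp_0_7 (a : O) : Pexp a 0 7 = -a 7 := rfl
@[simp] lemma Pexp_1_0 (a : O) : Pexp a 1 0 = a 1 := rfl
@[simp] lemma Pexp_1_1 (a : O) : Pexp a 1 1 = a 0 := rfl
@[simp] lemma Pexp_1_2 (a : O) : Pexp a 1 2 = -a 4 := rfl
@[simp] lemma Pexp_1_3 (a : O) : Pexp a 1 3 = -a 7 := rfl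
@[simp] lemma Pexp_1_4 (a : O) : Pexp a 1 4 = a 2 := rfl
@[simp] lemma Pexp_1_5 (a : O) : Pexp a 1 5 = -a 6 := rfl
@[simp] lemma Pexp_1_6 (a : O) : Pexp a 1 6 = a 5 := rfl
@[simp] lemma Pexp_1_7 (a : O) : Pexp a 1 7 = a 3 := rfl
@[simp] lemma Pexp_2_0 (a : O) : Pexp a 2 0 = a 2 := rfl
@[simp] lemma Pexp_2_1 (a : O) : Pexp a 2 1 = a 4 := rfl
@[simp] lemma Pexp_2_2 (a : O) : Pexp a 2 2 = a 0 := rfl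
@[simp] lemma Pexp_2_3 (a : O) : Pexp a 2 3 = -a 5 := rfl
@[simp] lemma Pexp_2_4 (a : O) : Pexp a 2 4 = -a 1 := rfl
@[simp] lemma Pexp_2_5 (a : O) : Pexp a 2 5 = a 3 := rfl
@[simp] lemma Pexp_2_6 (a : O) : Pexp a 2 6 = -a 7 := rfl
@[simp] lemma Pexp_2_7 (a : O) : Pexp a 2 7 = a 6 := rfl
@[simp] lemma Pexp_3_0 (a : O) : Pexp a 3 0 = a 3 := rfl
@[simp] lemma Pexp_3_1 (a : O) : Pexp a 3 1 = a 7 := rfl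
@[simp] lemma Pexp_3_2 (a : O) : Pexp a 3 2 = a 5 := rfl
@[simp] lemma Pexp_3_3 (a : O) : Pexp a 3 3 = a 0 := rfl
@[simp] lemma Pexp_3_4 (a : O) : Pexp a 3 4 = -a 6 := rfl
@[simp] lemma Pexp_3_5 (a : O) : Pexp a 3 5 = -a 2 := rfl
@[simp] lemma Pexp_3_6 (a : O) : Pexp a 3 6 = a 4 := rfl
@[simp] lemma Pexp_3_7 (a : O) : Pexp a 3 7 = -a 1 := rfl
@[simp] lemma Pexp_4_0 (a : O) : Pexp a 4 0 = a 4 := rfl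
@[simp] lemma Pexp_4_1 (a : O) : Pexp a 4 1 = -a 2 := rfl
@[simp] lemma Pexp_4_2 (a : O) : Pexp a 4 2 = a 1 := rfl
@[simp] lemma Pexp_4_3 (a : O) : Pexp a 4 3 = a 6 := rfl
@[simp] lemma Pexp_4_4 (a : O) : Pexp a 4 4 = a 0 := rfl
@[simp] lemma Pexp_4_5 (a : O) : Pexp a 4 5 = -a 7 := rfl
@[simp] lemma Pexp_4_6 (a : O) : Pexp a 4 6 = -a 3 := rfl
@[simp] lemma Pexp_4_7 (a : O) : Pexp a 4 7 = a 5 := rfl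
@[simp] lemma Pexp_5_0 (a : O) : Pexp a 5 0 = a 5 := rfl
@[simp] lemma Pexp_5_1 (a : O) : Pexp a 5 1 = a 6 := rfl
@[simp] lemma Pexp_5_2 (a : O) : Pexp a 5 2 = -a 3 := rfl
@[simp] lemma Pexp_5_3 (a : O) : Pexp a 5 3 = a 2 := rfl
@[simp] lemma Pexp_5_4 (a : O) : Pexp a 5 4 = a 7 := rfl
@[simp] lemma Pexp_5_5 (a : O) : Pexp a 5 5 = a 0 := rfl
@[simp] lemma Pexp_5_6 (a : O) : Pexp a 5 6 = -a 1 := rfl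
@[simp] lemma Pexp_5_7 (a : O) : Pexp a 5 7 = -a 4 := rfl
@[simp] lemma Pexp_6_0 (a : O) : Pexp a 6 0 = a 6 := rfl
@[simp] lemma Pexp_6_1 (a : O) : Pexp a 6 1 = -a 5 := rfl
@[simp] lemma Pexp_6_2 (a : O) : Pexp a 6 2 = a 7 := rfl
@[simp] lemma Pexp_6_3 (a : O) : Pexp a 6 3 = -a 4 := rfl
@[simp] lemma Pexp_6_4 (a : O) : Pexp a 6 4 = a 3 := rfl
@[simp] lemma Pexp_6_5 (a : O) : Pexp a 6 5 = a 1 := rfl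
@[simp] lemma Pexp_6_6 (a : O) : Pexp a 6 6 = a 0 := rfl
@[simp] lemma Pexp_6_7 (a : O) : Pexp a 6 7 = -a 2 := rfl
@[simp] lemma Pexp_7_0 (a : O) : Pexp a 7 0 = a 7 := rfl
@[simp] lemma Pexp_7_1 (a : O) : Pexp a 7 1 = -a 3 := rfl
@[simp] lemma Pexp_7_2 (a : O) : Pexp a 7 2 = -a 6 := rfl
@[simp] lemma Pexp_7_3 (a : O) : Pexp a 7 3 = a 1 := rfl
@[simp] lemma Pexp_7_4 (a : O) : Pexp a 7 4 = -a 5 := rfl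
@[simp] lemma Pexp_7_5 (a : O) : Pexp a 7 5 = a 4 := rfl
@[simp] lemma Pexp_7_6 (a : O) : Pexp a 7 6 = a 2 := rfl
@[simp] lemma Pexp_7_7 (a : O) : Pexp a 7 7 = a 0 := rfl

set_option maxHeartbeats 1000000 in
lemma conjE_mul (a : O) (i : Fin 8) : omul (oconj (e i)) a = cE a i := by
  funext m
  fin_cases i <;>
    simp only [omul, oconj, e, Fin.sum_univ_eight] <;>
    fin_cases m <;>
    (try simp) <;> rfl

set_option maxHeartbeats 1000000 in
lemma omul_e_zero (u : O) (k : Fin 8) :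
    omul u (e k) 0 = if k = 0 then u 0 else -u k := by
  fin_cases k <;> simp [omul, e, Fin.sum_univ_eight]

lemma P_apply (a : O) (i k : Fin 8) :
    P a i k = if k = 0 then cE a i 0 else -(cE a i k) := by
  rw [show P a i k = otr (omul (omul (oconj (e i)) a) (e k)) / 2 from rfl,
    conjE_mul, otr, omul_e_zero]
  split <;> ring

set_option maxHeartbeats 1000000 in
lemma P_eq (a : O) : P a = Pexp a := by
  ext i k
  rw [P_apply]
  fin_cases i <;> fin_cases k <;> simp

lemma otr_conj_mul (a b : O) :
    otr (omul (oconj a) b) =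
      2 * (a 0 * b 0 + a 1 * b 1 + a 2 * b 2 + a 3 * b 3 + a 4 * b 4 + a 5 * b 5 +
        a 6 * b 6 + a 7 * b 7) := by
  simp [omul, oconj, otr, Fin.sum_univ_eight]

set_option maxHeartbeats 4000000 in
theorem P_clifford_bilinear (a b : O) :
    P a * (P b)ᵀ + P b * (P a)ᵀ =
      otr (omul (oconj a) b) • (1 : Matrix (Fin 8) (Fin 8) ℝ) := by
  rw [P_eq, P_eq, otr_conj_mul]
  ext i k
  fin_cases i <;> fin_cases k <;>
    simp [Matrix.mul_apply, Matrix.one_apply, Fin.sum_univ_eight] <;> ring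

end
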